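/- For every integer l ≥ 0, (1/(2l)!) ∫_ℝ |x| H_{2l}(x) e^{−x²/2}/√(2π) dx = √(2/π) · (−1)^{l+1}/(2^l · l! · (2l−1)). -/

import Mathlib

set_option autoImplicit false

open MeasureTheory Real

/-- The probabilists' Hermite polynomial
`H_q(x) = (−1)^q e^{x²/2} (d/dx)^q e^{−x²/2}`. -/
noncomputable def hermiteP (q : ℕ) (x : ℝ) : ℝ :=
  (-1 : ℝ) ^ q * Real.exp (x ^ 2 / 2) *
    iteratedDeriv q (fun t : ℝ => Real.exp (-t ^ 2 / 2)) x

set_option maxHeartbeats 1000000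

open Polynomial Filter Set
open scoped Nat

private noncomputable def gss : ℝ → ℝ := fun y => Real.exp (-(y ^ 2 / 2))

private lemma gss_contDiff : ContDiff ℝ (⊤ : ℕ∞) gss := by
  unfold gss
  exact Real.contDiff_exp.comp (((contDiff_id.pow 2).div_const 2).neg)

private lemma hasDerivAt_iter (k : ℕ) (x : ℝ) :
    HasDerivAt (iteratedDeriv k gss) (iteratedDeriv (k + 1) gss x) x := by
  rw [iteratedDeriv_succ]
  exact ((gss_contDiff.differentiable_iteratedDeriv k (by
    exact_mod_cast lt_of_lt_of_le (WithTop.coe_lt_top _) le_rfl)) x).hasDerivAt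

private lemma iter_eq (k : ℕ) (x : ℝ) :
    iteratedDeriv k gss x = (-1 : ℝ) ^ k * aeval x (hermite k) * Real.exp (-(x ^ 2 / 2)) := by
  rw [show iteratedDeriv k gss = deriv^[k] gss from iteratedDeriv_eq_iterate]
  exact Polynomial.deriv_gaussian_eq_hermite_mul_gaussian k x

private lemma poly_gauss_eq (p : Polynomial ℤ) :
    (fun x : ℝ => aeval x p * Real.exp (-(x ^ 2 / 2))) =
      fun x => ∑ i ∈ Finset.range (p.natDegree + 1),
        (p.coeff i : ℝ) * (x ^ i * Real.exp (-(x ^ 2 / 2))) := by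
  funext x
  rw [Polynomial.aeval_eq_sum_range, Finset.sum_mul]
  refine Finset.sum_congr rfl fun i _ => ?_
  simp [zsmul_eq_mul, mul_assoc]

private lemma tendsto_pow_gauss (i : ℕ) :
    Tendsto (fun x : ℝ => x ^ i * Real.exp (-(x ^ 2 / 2))) atTop (nhds 0) := by
  have hg : Tendsto (fun x : ℝ => Real.exp (-(1/2) * x)) atTop (nhds 0) := by
    have := tendsto_exp_neg_atTop_nhds_zero.comp
      (tendsto_id.atTop_div_const (by norm_num : (0:ℝ) < 2))
    refine this.congr fun x => ?_
    simp only [Function.comp_apply, id]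
    congr 1; ring
  have h := (rpow_mul_exp_neg_mul_sq_isLittleO_exp_neg (b := 1/2) (by norm_num)
    (i : ℝ)).tendsto_zero_of_tendsto hg
  refine h.congr' ?_
  filter_upwards [eventually_ge_atTop (0 : ℝ)] with x hx
  rw [Real.rpow_natCast, show -(1/2 : ℝ) * x ^ 2 = -(x ^ 2 / 2) by ring]

private lemma tendsto_poly_gauss (p : Polynomial ℤ) :
    Tendsto (fun x : ℝ => aeval x p * Real.exp (-(x ^ 2 / 2))) atTop (nhds 0) := by
  rw [poly_gauss_eq]
  have := tendsto_finset_sum (Finset.range (p.natDegree + 1))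
    (fun i _ => ((tendsto_pow_gauss i).const_mul ((p.coeff i : ℝ))))
  simpa using this

private lemma integrableOn_poly_gauss (p : Polynomial ℤ) :
    IntegrableOn (fun x : ℝ => aeval x p * Real.exp (-(x ^ 2 / 2))) (Ioi 0) := by
  rw [poly_gauss_eq]
  apply integrable_finset_sum
  intro i _
  apply Integrable.const_mul
  have h := integrableOn_rpow_mul_exp_neg_mul_sq (b := 1/2) (by norm_num)
    (s := (i : ℝ)) (lt_of_lt_of_le (by norm_num) (Nat.cast_nonneg i))
  refine h.congr_fun (fun x hx => ?_) measurableSet_Ioi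
  beta_reduce
  rw [Real.rpow_natCast, show -(1/2 : ℝ) * x ^ 2 = -(x ^ 2 / 2) by ring]

private lemma hermiteP_eq (q : ℕ) (x : ℝ) : hermiteP q x = aeval x (hermite q) := by
  unfold hermiteP
  rw [show (fun t : ℝ => Real.exp (-t ^ 2 / 2)) = gss from funext fun t => by
    rw [neg_div]; rfl, iter_eq]
  have h1 : (-1 : ℝ) ^ q * (-1 : ℝ) ^ q = 1 := by
    rw [← pow_add]
    exact Even.neg_one_pow ⟨q, by ring⟩
  calc (-1:ℝ)^q * Real.exp (x^2/2) * ((-1:ℝ)^q * aeval x (hermite q) * Real.exp (-(x^2/2)))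
      = ((-1:ℝ)^q * (-1:ℝ)^q) * aeval x (hermite q) *
        (Real.exp (x^2/2) * Real.exp (-(x^2/2))) := by ring
    _ = aeval x (hermite q) := by rw [h1, ← Real.exp_add]; simp

private lemma hermite_even (l : ℕ) (x : ℝ) :
    aeval (-x) (hermite (2 * l)) = aeval x (hermite (2 * l)) := by
  rw [Polynomial.aeval_eq_sum_range, Polynomial.aeval_eq_sum_range]
  refine Finset.sum_congr rfl fun i _ => ?_
  rcases Nat.even_or_odd i with hi | hi
  · rw [hi.neg_pow]
  · rw [Polynomial.coeff_hermite_of_odd_add (by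
      rcases hi with ⟨k, hk⟩
      exact ⟨l + k, by omega⟩)]
    simp

private lemma hermite_abs (l : ℕ) (x : ℝ) :
    aeval |x| (hermite (2 * l)) = aeval x (hermite (2 * l)) := by
  rcases abs_cases x with ⟨h, _⟩ | ⟨h, _⟩
  · rw [h]
  · rw [h, hermite_even]

private lemma hermite_zero_eval (m : ℕ) :
    aeval (0 : ℝ) (hermite (2 * m)) = (-1 : ℝ) ^ m * ((2 * m - 1)‼ : ℝ) := by
  have h := Polynomial.coeff_hermite_explicit m 0
  rw [Nat.add_zero] at h
  rw [Polynomial.aeval_def, Polynomial.eval₂_at_zero, h]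
  push_cast
  simp

private lemma integral_l0 :
    ∫ x in Ioi (0:ℝ), x * aeval x (hermite 0) * Real.exp (-(x ^ 2 / 2)) = 1 := by
  have hint : ∀ x : ℝ, x * aeval x (hermite 0) * Real.exp (-(x ^ 2 / 2)) =
      aeval x ((X : Polynomial ℤ)) * Real.exp (-(x ^ 2 / 2)) := by
    intro x; simp [Polynomial.hermite_zero]
  have hG : ∀ x : ℝ, HasDerivAt (fun y : ℝ => -Real.exp (-(y ^ 2 / 2)))
      (x * aeval x (hermite 0) * Real.exp (-(x ^ 2 / 2))) x := by
    intro x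
    have h1 : HasDerivAt (fun y : ℝ => -(y ^ 2 / 2)) (-x) x := by
      have := ((hasDerivAt_pow 2 x).div_const 2).neg
      exact this.congr_deriv (by ring)
    have := (h1.exp).neg
    rw [hint]
    rw [aeval_X]
    exact this.congr_deriv (by ring)
  have := integral_Ioi_of_hasDerivAt_of_tendsto (f := fun y : ℝ => -Real.exp (-(y ^ 2 / 2)))
    (f' := fun x => x * aeval x (hermite 0) * Real.exp (-(x ^ 2 / 2))) (a := 0) (m := 0)
    ((hG 0).continuousAt.continuousWithinAt)
    (fun x _ => hG x)
    (by
      refine (integrableOn_poly_gauss (X : Polynomial ℤ)).congr_fun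
        (fun x _ => (hint x).symm) measurableSet_Ioi)
    (by
      have := (tendsto_poly_gauss (1 : Polynomial ℤ)).neg
      simpa using this)
  rw [this]
  norm_num

private lemma integral_key (m : ℕ) :
    ∫ x in Ioi (0:ℝ), x * aeval x (hermite (2 * m + 2)) * Real.exp (-(x ^ 2 / 2))
      = (-1 : ℝ) ^ m * ((2 * m - 1)‼ : ℝ) := by
  set G : ℝ → ℝ := fun x => x * iteratedDeriv (2 * m + 1) gss x - iteratedDeriv (2 * m) gss x
    with hGdef
  have hint : ∀ x : ℝ, x * aeval x (hermite (2 * m + 2)) * Real.exp (-(x ^ 2 / 2)) =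
      aeval x ((X : Polynomial ℤ) * hermite (2 * m + 2)) * Real.exp (-(x ^ 2 / 2)) := by
    intro x; rw [map_mul, aeval_X]
  have hG : ∀ x : ℝ, HasDerivAt G
      (x * aeval x (hermite (2 * m + 2)) * Real.exp (-(x ^ 2 / 2))) x := by
    intro x
    have h1 := (hasDerivAt_id x).mul (hasDerivAt_iter (2 * m + 1) x)
    have h2 := (h1.sub (hasDerivAt_iter (2 * m) x))
    have h3 : (1 : ℝ) * iteratedDeriv (2 * m + 1) gss x +
        id x * iteratedDeriv (2 * m + 1 + 1) gss x - iteratedDeriv (2 * m + 1) gss x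
        = x * aeval x (hermite (2 * m + 2)) * Real.exp (-(x ^ 2 / 2)) := by
      have e1 : ((-1 : ℝ) ^ (2 * m + 1)) = -1 := Odd.neg_one_pow ⟨m, by ring⟩
      have e2 : ((-1 : ℝ) ^ (2 * m + 2)) = 1 := Even.neg_one_pow ⟨m + 1, by ring⟩
      simp only [show 2 * m + 1 + 1 = 2 * m + 2 from rfl, iter_eq, e1, e2, id]
      ring
    exact h2.congr_deriv h3
  have hG0 : G 0 = -((-1 : ℝ) ^ m * ((2 * m - 1)‼ : ℝ)) := by
    rw [hGdef]
    simp only [zero_mul, zero_sub]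
    rw [iter_eq]
    have : ((-1 : ℝ) ^ (2 * m)) = 1 := Even.neg_one_pow ⟨m, by ring⟩
    rw [this, hermite_zero_eval]
    simp
  have htend : Tendsto G atTop (nhds 0) := by
    have h := tendsto_poly_gauss (-((X : Polynomial ℤ) * hermite (2 * m + 1)) - hermite (2 * m))
    refine h.congr fun x => ?_
    rw [hGdef]
    simp only [map_sub, map_neg, map_mul, aeval_X]
    rw [iter_eq, iter_eq]
    have h1 : ((-1 : ℝ) ^ (2 * m + 1)) = -1 := Odd.neg_one_pow ⟨m, by ring⟩
    have h2 : ((-1 : ℝ) ^ (2 * m)) = 1 := Even.neg_one_pow ⟨m, by ring⟩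
    rw [h1, h2]; ring
  have := integral_Ioi_of_hasDerivAt_of_tendsto (f := G)
    (f' := fun x => x * aeval x (hermite (2 * m + 2)) * Real.exp (-(x ^ 2 / 2))) (a := 0) (m := 0)
    ((hG 0).continuousAt.continuousWithinAt)
    (fun x _ => hG x)
    ((integrableOn_poly_gauss ((X : Polynomial ℤ) * hermite (2 * m + 2))).congr_fun
      (fun x _ => (hint x).symm) measurableSet_Ioi)
    htend
  rw [this, hG0]
  ring

theorem hermite_abs_integral (l : ℕ) :
    (1 / ((2 * l).factorial : ℝ)) *
      ∫ x : ℝ, |x| * hermiteP (2 * l) x * (Real.exp (-x ^ 2 / 2) / Real.sqrt (2 * π))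
    = Real.sqrt (2 / π) * (-1 : ℝ) ^ (l + 1)
        / (2 ^ l * (l.factorial : ℝ) * (2 * (l : ℝ) - 1)) := by
  have hπ : 0 < π := Real.pi_pos
  have hs : Real.sqrt (2 * π) ≠ 0 := by positivity
  have hsqrt : Real.sqrt (2 / π) = 2 / Real.sqrt (2 * π) := by
    rw [eq_div_iff hs, ← Real.sqrt_mul (by positivity)]
    rw [show (2 / π) * (2 * π) = 4 by field_simp; ring]
    rw [show (4 : ℝ) = 2 ^ 2 by norm_num, Real.sqrt_sq (by norm_num)]
  have hfun : (fun x : ℝ => |x| * hermiteP (2 * l) x *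
        (Real.exp (-x ^ 2 / 2) / Real.sqrt (2 * π)))
      = fun x : ℝ => (fun y : ℝ =>
          y * aeval y (hermite (2 * l)) * Real.exp (-(y ^ 2 / 2)) / Real.sqrt (2 * π)) |x| := by
    funext x
    simp only
    rw [hermiteP_eq, hermite_abs, sq_abs, neg_div]
    ring
  rw [hfun, integral_comp_abs (f := fun y : ℝ =>
    y * aeval y (hermite (2 * l)) * Real.exp (-(y ^ 2 / 2)) / Real.sqrt (2 * π)),
    integral_div]
  rcases l with _ | m
  · have h0 : ∫ a in Ioi (0:ℝ), a * Real.exp (-(a ^ 2 / 2)) = 1 := by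
      simpa using integral_l0
    have h2 : Real.sqrt 2 * Real.sqrt 2 = 2 := Real.mul_self_sqrt (by norm_num)
    have hp2 : Real.sqrt 2 ≠ 0 := by positivity
    have hpp : Real.sqrt π ≠ 0 := by positivity
    norm_num [h0]
    field_simp
    linear_combination (-1 : ℝ) * Real.sq_sqrt (by norm_num : (0:ℝ) ≤ 2)
  · have hnat : (2 * (m + 1)).factorial
        = 2 ^ (m + 1) * (m + 1).factorial * ((2 * m + 1) * (2 * m - 1)‼) := by
      rw [show 2 * (m + 1) = (2 * m + 1) + 1 by ring, Nat.factorial_eq_mul_doubleFactorial,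
        show (2 * m + 1) + 1 = 2 * (m + 1) by ring, Nat.doubleFactorial_two_mul,
        Nat.doubleFactorial_add_one]
    rw [show 2 * (m + 1) = 2 * m + 2 by ring, integral_key, hsqrt,
      show 2 * m + 2 = 2 * (m + 1) by ring, hnat]
    have hfac : ((m + 1).factorial : ℝ) ≠ 0 := Nat.cast_ne_zero.mpr (Nat.factorial_ne_zero _)
    have hd : ((2 * m - 1)‼ : ℝ) ≠ 0 := Nat.cast_ne_zero.mpr (Nat.doubleFactorial_pos _).ne'
    have hc : (2 * ((m : ℝ) + 1) - 1) ≠ 0 := by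
      have : (2 * ((m : ℝ) + 1) - 1) = 2 * m + 1 := by ring
      rw [this]; positivity
    have hsign : ((-1 : ℝ)) ^ (m + 1 + 1) = (-1) ^ m := by
      rw [show m + 1 + 1 = m + 2 from rfl, pow_add, neg_one_sq, mul_one]
    push_cast
    rw [hsign]
    field_simp
    ring
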